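/- arXiv:0901.1104 — 3 statements merged into one kernel-verified Lean document; each statement's English description precedes it below -/
import Mathlib

section
/- For every real t > 0, 1/(t²+1/2) < ∑_{k=1}^∞ 2k/(k²+t²)² < 1/t². -/
/-!
With `x = k + 1`, `(x² + c)² - x² = ((x - 1) x + c) (x (x + 1) + c)`, so
`2x / ((x² + c)² - x²) = 1 / ((x - 1) x + c) - 1 / (x (x + 1) + c)` and these terms telescope
to `1 / c`. Termwise, `2x / (x² + t²)²` lies strictly between the telescoping terms for
`c = t² + 1/2` and for `c = t²`, which gives both bounds.
-/

open Filter Topology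

theorem hasSum_sub_succ_of_antitone {g : ℕ → ℝ} (hg : Antitone g)
    (hlim : Tendsto g atTop (𝓝 0)) : HasSum (fun n ↦ g n - g (n + 1)) (g 0) := by
  rw [hasSum_iff_tendsto_nat_of_nonneg fun n ↦ sub_nonneg.2 (hg n.le_succ)]
  simp_rw [Finset.sum_range_sub']
  simpa using tendsto_const_nhds.sub hlim

theorem hasSum_two_mul_div_sq_add_sub_sq {c : ℝ} (hc : 0 < c) :
    HasSum (fun n : ℕ ↦ 2 * ((n : ℝ) + 1) / ((((n : ℝ) + 1) ^ 2 + c) ^ 2 - ((n : ℝ) + 1) ^ 2))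
      (1 / c) := by
  set g : ℕ → ℝ := fun n ↦ 1 / ((n : ℝ) * (n + 1) + c)
  have hpos (n : ℕ) : 0 < (n : ℝ) * (n + 1) + c := by positivity
  have hdiff (n : ℕ) : g n - g (n + 1) =
      2 * ((n : ℝ) + 1) / ((((n : ℝ) + 1) ^ 2 + c) ^ 2 - ((n : ℝ) + 1) ^ 2) := by
    have := hpos (n + 1)
    push_cast at this
    simp only [g]
    push_cast
    rw [div_sub_div _ _ (hpos n).ne' this.ne', div_eq_div_iff (by positivity)
      (by nlinarith [mul_pos (hpos n) this])]
    ring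
  have hanti : Antitone g := antitone_nat_of_succ_le fun n ↦
    one_div_le_one_div_of_le (hpos n) (by push_cast; nlinarith)
  have hlim : Tendsto g atTop (𝓝 0) := by
    have hN := tendsto_natCast_atTop_atTop (R := ℝ)
    simp only [g, one_div]
    exact ((hN.atTop_mul_atTop₀ (tendsto_atTop_add_const_right _ 1 hN)).atTop_add
      tendsto_const_nhds).inv_tendsto_atTop
  convert hasSum_sub_succ_of_antitone hanti hlim using 1
  · exact funext fun n ↦ (hdiff n).symm
  · simp [g]

theorem two_mul_div_sq_lt_div_sq_sub_sq {x c : ℝ} (hx : 1 ≤ x) (hc : 0 < c) :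
    2 * x / (x ^ 2 + c) ^ 2 < 2 * x / ((x ^ 2 + c) ^ 2 - x ^ 2) := by
  have hfac : 0 < x ^ 2 - x + c := by nlinarith
  have : 0 < (x ^ 2 + c) ^ 2 - x ^ 2 := by
    nlinarith [mul_pos hfac (by positivity : 0 < x ^ 2 + x + c)]
  gcongr
  nlinarith

theorem two_mul_div_sq_sub_sq_lt_div_sq {x c : ℝ} (hx : 0 < x) (hc : 0 ≤ c) :
    2 * x / ((x ^ 2 + (c + 1 / 2)) ^ 2 - x ^ 2) < 2 * x / (x ^ 2 + c) ^ 2 := by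
  -- the denominator on the left is `(x² + c)² + c + 1/4`
  gcongr
  nlinarith

theorem makai_double_inequality (t : ℝ) (ht : 0 < t) :
    1 / (t ^ 2 + 1 / 2) < (∑' k : ℕ, 2 * ((k : ℝ) + 1) / (((k : ℝ) + 1) ^ 2 + t ^ 2) ^ 2) ∧
    (∑' k : ℕ, 2 * ((k : ℝ) + 1) / (((k : ℝ) + 1) ^ 2 + t ^ 2) ^ 2) < 1 / t ^ 2 := by
  have ht2 : 0 < t ^ 2 := by positivity
  have hupper (k : ℕ) := two_mul_div_sq_lt_div_sq_sub_sq (x := (k : ℝ) + 1) (by simp) ht2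
  have hlower (k : ℕ) :=
    two_mul_div_sq_sub_sq_lt_div_sq (x := (k : ℝ) + 1) (by positivity) ht2.le
  have hU := hasSum_two_mul_div_sq_add_sub_sq ht2
  have hL := hasSum_two_mul_div_sq_add_sub_sq (c := t ^ 2 + 1 / 2) (by positivity)
  have hS : Summable fun k : ℕ ↦ 2 * ((k : ℝ) + 1) / (((k : ℝ) + 1) ^ 2 + t ^ 2) ^ 2 :=
    hU.summable.of_nonneg_of_le (fun _ ↦ by positivity) fun k ↦ (hupper k).le
  exact ⟨hasSum_lt (fun k ↦ (hlower k).le) (hlower 0) hL hS.hasSum,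
    hasSum_lt (fun k ↦ (hupper k).le) (hupper 0) hS.hasSum hU⟩
end

section
/- Let g be convex on (0,∞) with ∫_1^∞ g(x) dx convergent. Then for every u ≥ −3/2 and y > −(1+u)², ∫_{(1+u)²+y}^∞ g(x) dx + (1/2+u)·g((1+u)²+y) ≤ ∑_{k=1}^∞ 2(k+u)·g((k+u)²+y). -/
/-!
A convex function that is integrable at infinity is nonnegative and nonincreasing. The nodes
`t k = (k + 1 + u) ^ 2 + y` are spaced by `t (k + 1) - t k = 2 (k + 3/2 + u)`, so the trapezoid
rule, which overestimates integrals of convex functions, bounds `∫_{t 0}^{t N} g` by a sum whose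
weights regroup into `2 (k + 1 + u)`, up to the boundary terms `(1/2 + u) g (t 0)` and
`(N + 3/2 + u) g (t N) ≥ 0`. Letting `N → ∞` gives the inequality; the series converges because
its terms are dominated by rectangles under the graph of `g`.
-/

open MeasureTheory Set Filter

section
variable {E : Type*} [NormedAddCommGroup E] {g : ℝ → E} {b c : ℝ}

theorem not_integrableOn_Ioi_of_eventually_le_norm (hc : 0 < c)
    (h : ∀ᶠ x in atTop, c ≤ ‖g x‖) : ¬ IntegrableOn g (Ioi b) := by
  intro hint
  obtain ⟨T, hT⟩ := eventually_atTop.1 h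
  have hconst : IntegrableOn (fun _ ↦ c) (Ioi (max b T)) := by
    refine Integrable.mono (hint.mono_set (Ioi_subset_Ioi (le_max_left b T)))
      aestronglyMeasurable_const ?_
    filter_upwards [ae_restrict_mem measurableSet_Ioi] with x hx
    rw [Real.norm_of_nonneg hc.le]
    exact hT x (le_max_right b T |>.trans hx.le)
  simp [integrableOn_const_iff, hc.ne', Real.volume_Ioi] at hconst

end

section
variable {g : ℝ → ℝ} {a b : ℝ}

theorem ConvexOn.antitoneOn_of_integrableOn_Ioi (hg : ConvexOn ℝ (Ici a) g)
    (hint : IntegrableOn g (Ioi b)) : AntitoneOn g (Ici a) := by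
  intro s hs t ht hst
  by_contra! hlt
  have hst' : s < t := hst.lt_of_ne (by rintro rfl; exact hlt.false)
  set m := (g t - g s) / (t - s)
  have hm : 0 < m := div_pos (sub_pos.2 hlt) (sub_pos.2 hst')
  -- beyond `t`, `g` stays above the secant line through `s` and `t`, which tends to `+∞`
  have hsecant : ∀ x, t < x → g t + m * (x - t) ≤ g x := fun x hx ↦ by
    have := hg.slope_mono_adjacent hs (mem_Ici.2 (ht.out.trans hx.le)) hst' hx
    rw [le_div_iff₀ (sub_pos.2 hx)] at this
    linarith
  refine not_integrableOn_Ioi_of_eventually_le_norm one_pos ?_ hint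
  have hlim : Tendsto (fun x ↦ g t + m * (x - t)) atTop atTop :=
    tendsto_atTop_add_const_left _ _
      ((tendsto_atTop_add_const_right _ _ tendsto_id).const_mul_atTop hm)
  filter_upwards [hlim.eventually_ge_atTop 1, eventually_gt_atTop t] with x h1 hx
  exact h1.trans ((hsecant x hx).trans (Real.le_norm_self _))

theorem AntitoneOn.nonneg_of_integrableOn_Ioi (hg : AntitoneOn g (Ici a))
    (hint : IntegrableOn g (Ioi b)) : 0 ≤ g a := by
  by_contra! hneg
  refine not_integrableOn_Ioi_of_eventually_le_norm (neg_pos.2 hneg) ?_ hint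
  filter_upwards [eventually_ge_atTop a] with x hx
  have := hg self_mem_Ici hx hx
  rw [Real.norm_eq_abs]
  exact (neg_le_neg this).trans (neg_le_abs _)

theorem ConvexOn.nonneg_of_integrableOn_Ioi (hg : ConvexOn ℝ (Ici a) g)
    (hint : IntegrableOn g (Ioi b)) {x : ℝ} (hx : a ≤ x) : 0 ≤ g x :=
  ((hg.antitoneOn_of_integrableOn_Ioi hint).mono (Ici_subset_Ici.2 hx)).nonneg_of_integrableOn_Ioi
    hint

theorem AntitoneOn.sub_mul_le_intervalIntegral (hg : AntitoneOn g (Icc a b)) (hab : a ≤ b) :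
    (b - a) * g b ≤ ∫ x in a..b, g x := by
  have := intervalIntegral.integral_mono_on hab (intervalIntegrable_const (μ := volume))
    (hg.mono (uIcc_of_le hab).subset |>.intervalIntegrable) fun x hx ↦ hg hx ⟨hab, le_rfl⟩ hx.2
  simpa using this

theorem ConvexOn.le_chord (hg : ConvexOn ℝ (Icc a b) g) (hab : a < b) {x : ℝ} (hx : x ∈ Icc a b) :
    g x ≤ ((b - x) * g a + (x - a) * g b) / (b - a) := by
  have hba : 0 < b - a := sub_pos.2 hab
  have h := hg.2 (left_mem_Icc.2 hab.le) (right_mem_Icc.2 hab.le)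
    (div_nonneg (sub_nonneg.2 hx.2) hba.le) (div_nonneg (sub_nonneg.2 hx.1) hba.le)
    (by field_simp; ring)
  have hx' : ((b - x) / (b - a)) • a + ((x - a) / (b - a)) • b = x := by
    simp only [smul_eq_mul]; field_simp; ring
  rw [hx', smul_eq_mul, smul_eq_mul] at h
  exact h.trans_eq (by field_simp)

theorem ConvexOn.intervalIntegral_le_trapezoid (hg : ConvexOn ℝ (Icc a b) g) (hab : a ≤ b)
    (hint : IntervalIntegrable g volume a b) :
    ∫ x in a..b, g x ≤ (b - a) * (g a + g b) / 2 := by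
  rcases hab.eq_or_lt with rfl | hab
  · simp
  calc ∫ x in a..b, g x ≤ ∫ x in a..b, ((b - x) * g a + (x - a) * g b) / (b - a) :=
        intervalIntegral.integral_mono_on hab.le hint
          (Continuous.intervalIntegrable (by fun_prop) _ _) fun x hx ↦ hg.le_chord hab hx
    _ = (b - a) * (g a + g b) / 2 := by
        rw [intervalIntegral.integral_div, intervalIntegral.integral_add
            (Continuous.intervalIntegrable (by fun_prop) _ _)
            (Continuous.intervalIntegrable (by fun_prop) _ _),
          intervalIntegral.integral_mul_const, intervalIntegral.integral_mul_const,
          intervalIntegral.integral_comp_sub_left (fun x ↦ x),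
          intervalIntegral.integral_comp_sub_right (fun x ↦ x), integral_id, integral_id]
        field_simp
        ring

theorem AntitoneOn.integrableOn_Ioi (hg : AntitoneOn g (Ici a)) (hint : IntegrableOn g (Ioi b)) :
    IntegrableOn g (Ioi a) :=
  (hint.union ((hg.mono Icc_subset_Ici_self).integrableOn_isCompact isCompact_Icc)).mono_set
    fun x hx ↦ (lt_or_ge b x).imp id fun hxb ↦ ⟨le_of_lt hx, hxb⟩

end

section
variable {g : ℝ → ℝ} {t : ℕ → ℝ}

theorem Monotone.intervalIntegrable_of_integrableOn_Ioi (ht : Monotone t)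
    (hint : IntegrableOn g (Ioi (t 0))) (k : ℕ) :
    IntervalIntegrable g volume (t k) (t (k + 1)) :=
  (intervalIntegrable_iff_integrableOn_Ioc_of_le (ht k.le_succ)).2 <|
    hint.mono_set fun _ hx ↦ (ht k.zero_le).trans_lt hx.1

theorem ConvexOn.intervalIntegral_le_sum_trapezoid (hg : ConvexOn ℝ (Ici (t 0)) g)
    (ht : Monotone t) (hint : IntegrableOn g (Ioi (t 0))) (n : ℕ) :
    ∫ x in t 0..t n, g x
      ≤ ∑ k ∈ Finset.range n, (t (k + 1) - t k) * (g (t k) + g (t (k + 1))) / 2 := by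
  rw [← intervalIntegral.sum_integral_adjacent_intervals fun k _ ↦
    ht.intervalIntegrable_of_integrableOn_Ioi hint k]
  refine Finset.sum_le_sum fun k _ ↦ ?_
  exact (hg.subset (Icc_subset_Ici_iff (ht k.le_succ) |>.2 (ht k.zero_le)) (convex_Icc _ _))
    |>.intervalIntegral_le_trapezoid (ht k.le_succ)
      (ht.intervalIntegrable_of_integrableOn_Ioi hint k)

theorem AntitoneOn.summable_sub_mul (hg : AntitoneOn g (Ici (t 0))) (ht : Monotone t)
    (hint : IntegrableOn g (Ioi (t 0))) :
    Summable fun k ↦ (t (k + 1) - t k) * g (t (k + 1)) := by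
  have hnonneg : ∀ x ∈ Ici (t 0), 0 ≤ g x := fun x hx ↦
    (hg.mono (Ici_subset_Ici.2 hx)).nonneg_of_integrableOn_Ioi hint
  refine summable_of_sum_range_le (c := ∫ x in Ioi (t 0), g x)
    (fun k ↦ mul_nonneg (sub_nonneg.2 (ht k.le_succ)) (hnonneg _ (ht (Nat.zero_le _)))) fun n ↦ ?_
  calc ∑ k ∈ Finset.range n, (t (k + 1) - t k) * g (t (k + 1))
      ≤ ∑ k ∈ Finset.range n, ∫ x in t k..t (k + 1), g x := Finset.sum_le_sum fun k _ ↦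
        (hg.mono (Icc_subset_Ici_iff (ht k.le_succ) |>.2 (ht k.zero_le)))
          |>.sub_mul_le_intervalIntegral (ht k.le_succ)
    _ = ∫ x in t 0..t n, g x := intervalIntegral.sum_integral_adjacent_intervals fun k _ ↦
        ht.intervalIntegrable_of_integrableOn_Ioi hint k
    _ ≤ ∫ x in Ioi (t 0), g x := by
        rw [intervalIntegral.integral_of_le (ht n.zero_le)]
        exact setIntegral_mono_set hint ((ae_restrict_mem measurableSet_Ioi).mono fun x hx ↦
          hnonneg x (mem_Ici.2 (le_of_lt hx))) (Eventually.of_forall Ioc_subset_Ioi_self)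

end

def mathieuNode (u y : ℝ) (k : ℕ) : ℝ := ((k : ℝ) + 1 + u) ^ 2 + y

section
variable {u y : ℝ}

theorem mathieuNode_succ_sub (k : ℕ) :
    mathieuNode u y (k + 1) - mathieuNode u y k = 2 * ((k : ℝ) + 3 / 2 + u) := by
  simp only [mathieuNode]; push_cast; ring

theorem monotone_mathieuNode (hu : -(3 / 2) ≤ u) : Monotone (mathieuNode u y) :=
  monotone_nat_of_le_succ fun k ↦ by
    have := mathieuNode_succ_sub (u := u) (y := y) k
    nlinarith [(Nat.cast_nonneg k : (0 : ℝ) ≤ k)]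

theorem tendsto_mathieuNode_atTop : Tendsto (mathieuNode u y) atTop atTop :=
  tendsto_atTop_add_const_right _ y <| (tendsto_pow_atTop two_ne_zero).comp <|
    tendsto_atTop_add_const_right _ u <|
      tendsto_atTop_add_const_right _ 1 tendsto_natCast_atTop_atTop

theorem sum_range_trapezoid_mathieu (c : ℕ → ℝ) (N : ℕ) :
    ∑ k ∈ Finset.range N, 2 * ((k : ℝ) + 3 / 2 + u) * (c k + c (k + 1)) / 2
      + (1 / 2 + u) * c 0 + ((N : ℝ) + 3 / 2 + u) * c N
      = ∑ k ∈ Finset.range (N + 1), 2 * ((k : ℝ) + 1 + u) * c k := by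
  induction N with
  | zero => simp; ring
  | succ N ih =>
    rw [Finset.sum_range_succ, Finset.sum_range_succ _ (N + 1), ← ih]
    push_cast; ring

variable {g : ℝ → ℝ}

theorem summable_mathieu (hu : -(3 / 2) ≤ u) (hg : ConvexOn ℝ (Ici (mathieuNode u y 0)) g)
    (hint : IntegrableOn g (Ioi (mathieuNode u y 0))) :
    Summable fun k : ℕ ↦ 2 * ((k : ℝ) + 1 + u) * g (mathieuNode u y k) := by
  have ht := monotone_mathieuNode (y := y) hu
  have hanti := hg.antitoneOn_of_integrableOn_Ioi hint
  have hΔ := (summable_nat_add_iff 1).2 (hanti.summable_sub_mul ht hint)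
  -- shifting by two makes `k + 3 + u ≤ 2 (k + 5/2 + u)` hold for every `u ≥ -3/2`
  refine (summable_nat_add_iff 2).1 ((hΔ.mul_left 2).of_nonneg_of_le (fun k ↦ ?_) fun k ↦ ?_) <;>
  · have hk : (0 : ℝ) ≤ k := k.cast_nonneg
    have hgk := hg.nonneg_of_integrableOn_Ioi hint (ht (Nat.zero_le (k + 2)))
    simp only [mathieuNode_succ_sub, Nat.cast_add, Nat.cast_ofNat, Nat.cast_one]
    nlinarith

theorem intervalIntegral_add_le_sum_mathieu (hu : -(3 / 2) ≤ u)
    (hg : ConvexOn ℝ (Ici (mathieuNode u y 0)) g)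
    (hint : IntegrableOn g (Ioi (mathieuNode u y 0))) (N : ℕ) :
    (∫ x in mathieuNode u y 0..mathieuNode u y N, g x) + (1 / 2 + u) * g (mathieuNode u y 0)
      ≤ ∑ k ∈ Finset.range (N + 1), 2 * ((k : ℝ) + 1 + u) * g (mathieuNode u y k) := by
  have ht := monotone_mathieuNode (y := y) hu
  have htrap := hg.intervalIntegral_le_sum_trapezoid ht hint N
  simp only [mathieuNode_succ_sub] at htrap
  have hlast : 0 ≤ ((N : ℝ) + 3 / 2 + u) * g (mathieuNode u y N) :=
    mul_nonneg (by linarith [N.cast_nonneg (α := ℝ)])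
      (hg.nonneg_of_integrableOn_Ioi hint (ht N.zero_le))
  rw [← sum_range_trapezoid_mathieu (fun k ↦ g (mathieuNode u y k)) N]
  linarith

theorem intervalIntegral_add_le_tsum_mathieu (hu : -(3 / 2) ≤ u)
    (hg : ConvexOn ℝ (Ici (mathieuNode u y 0)) g) (hint : IntegrableOn g (Ioi (mathieuNode u y 0)))
    (N : ℕ) :
    (∫ x in mathieuNode u y 0..mathieuNode u y N, g x) + (1 / 2 + u) * g (mathieuNode u y 0)
      ≤ ∑' k : ℕ, 2 * ((k : ℝ) + 1 + u) * g (mathieuNode u y k) := by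
  refine (intervalIntegral_add_le_sum_mathieu hu hg hint N).trans <|
    (summable_mathieu hu hg hint).sum_le_tsum _ fun k hk ↦ mul_nonneg ?_ <|
      hg.nonneg_of_integrableOn_Ioi hint (monotone_mathieuNode hu k.zero_le)
  have hk : (1 : ℝ) ≤ k := by
    rw [Finset.mem_range, not_lt] at hk
    exact_mod_cast (N.succ_pos.trans_le hk)
  linarith

end

theorem mathieu_lower_hermite_hadamard (g : ℝ → ℝ)
    (hg : ConvexOn ℝ (Set.Ioi (0 : ℝ)) g)
    (hint : MeasureTheory.IntegrableOn g (Set.Ioi (1 : ℝ)))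
    (u y : ℝ) (hu : -(3 / 2) ≤ u) (hy : -(1 + u) ^ 2 < y) :
    (∫ x in Set.Ioi ((1 + u) ^ 2 + y), g x) + (1 / 2 + u) * g ((1 + u) ^ 2 + y)
      ≤ ∑' k : ℕ, 2 * ((k : ℝ) + 1 + u) * g (((k : ℝ) + 1 + u) ^ 2 + y) := by
  have hnode : mathieuNode u y 0 = (1 + u) ^ 2 + y := by simp [mathieuNode]
  have hpos : 0 < mathieuNode u y 0 := by linarith
  have hg₀ : ConvexOn ℝ (Ici (mathieuNode u y 0)) g :=
    hg.subset (Ici_subset_Ioi.2 hpos) (convex_Ici _)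
  have hint₀ : IntegrableOn g (Ioi (mathieuNode u y 0)) :=
    (hg₀.antitoneOn_of_integrableOn_Ioi hint).integrableOn_Ioi hint
  have hlim := (intervalIntegral_tendsto_integral_Ioi _ hint₀
    (tendsto_mathieuNode_atTop (u := u) (y := y))).add_const ((1 / 2 + u) * g (mathieuNode u y 0))
  rw [← hnode]
  exact le_of_tendsto' hlim (intervalIntegral_add_le_tsum_mathieu hu hg₀ hint₀)
end

section
/- For every μ > 0, u ≥ −1 with u²+u+y > 0, the inequalities 1/(μ((1+u)²+y)^μ) + (1/2+u)/((1+u)²+y)^{μ+1} < ∑_{k=1}^∞ 2(k+u)/((k+u)²+y)^{μ+1} < 1/(μ(u²+u+y)^μ) hold. -/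
/-!
Let `f x = x ^ (-(μ + 1))`, strictly convex on `(0, ∞)` with primitive `-x ^ (-μ) / μ`, and put
`t k = k + 1 + u`, `m k = t k ^ 2 + y`, so that the `k`-th term of the series is
`2 * t k * f (m k)`.
The strict Hermite–Hadamard inequalities give
* (midpoint rule) `2 * t k * f (m k) ≤ ∫ f` over `[m k - t k, m k + t k]`, strictly when
  `t k > 0`; these intervals tile `[u ^ 2 + u + y, ∞)`;
* (trapezoid rule) `∫ f < (t k + 1 / 2) * (f (m k) + f (m (k + 1)))` over `[m k, m (k + 1)]`, an
  interval of length `2 * t k + 1`; these intervals tile `[m 0, ∞)`.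
Summing over `k`, the integrals telescope, and the trapezoid sums regroup into the series minus
`(1 / 2 + u) * f (m 0)`.
-/

open Real Set Filter Topology intervalIntegral

theorem StrictConvexOn.midpoint_rule_lt_integral {f : ℝ → ℝ} {x h : ℝ} (hh : 0 < h)
    (hf : StrictConvexOn ℝ (Icc (x - h) (x + h)) f) (hfc : ContinuousOn f (Icc (x - h) (x + h))) :
    2 * h * f x < ∫ t in (x - h)..(x + h), f t := by
  have hsub : Icc x (x + h) ⊆ Icc (x - h) (x + h) := Icc_subset_Icc_left (by linarith)
  have hmaps : MapsTo (fun t ↦ 2 * x - t) (Icc x (x + h)) (Icc (x - h) (x + h)) :=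
    fun t ht ↦ ⟨by linarith [ht.2], by linarith [ht.1]⟩
  have hcont : ContinuousOn (fun t ↦ f (2 * x - t) + f t) (Icc x (x + h)) :=
    (hfc.comp (by fun_prop) hmaps).add (hfc.mono hsub)
  have hsplit : ∫ t in (x - h)..(x + h), f t = ∫ t in x..(x + h), (f (2 * x - t) + f t) := by
    have hleft : IntervalIntegrable f MeasureTheory.volume (x - h) x :=
      (hfc.mono (Icc_subset_Icc_right (by linarith))).intervalIntegrable_of_Icc (by linarith)
    have hright : IntervalIntegrable f MeasureTheory.volume x (x + h) :=
      (hfc.mono hsub).intervalIntegrable_of_Icc (by linarith)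
    rw [← integral_add_adjacent_intervals hleft hright, integral_add _ hright,
      integral_comp_sub_left]
    · ring_nf
    · exact (hfc.comp (by fun_prop) hmaps).intervalIntegrable_of_Icc (by linarith)
  have hjensen : ∀ t ∈ Ioc x (x + h), 2 * f x < f (2 * x - t) + f t := by
    intro t ht
    have key : f ((1 / 2 : ℝ) • (2 * x - t) + (1 / 2 : ℝ) • t)
        < (1 / 2 : ℝ) • f (2 * x - t) + (1 / 2 : ℝ) • f t :=
      hf.2 (hmaps (Ioc_subset_Icc_self ht)) (hsub (Ioc_subset_Icc_self ht))
        (by linarith [ht.1]) (by norm_num) (by norm_num) (by norm_num)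
    simp only [smul_eq_mul] at key
    rw [show 1 / 2 * (2 * x - t) + 1 / 2 * t = x by ring] at key
    linarith
  calc 2 * h * f x = ∫ _ in x..(x + h), 2 * f x := by rw [integral_const, smul_eq_mul]; ring
    _ < ∫ t in x..(x + h), (f (2 * x - t) + f t) :=
      integral_lt_integral_of_continuousOn_of_le_of_exists_lt (by linarith) continuousOn_const
        hcont (fun t ht ↦ (hjensen t ht).le) ⟨x + h, right_mem_Icc.2 (by linarith),
        hjensen _ (right_mem_Ioc.2 (by linarith))⟩
    _ = ∫ t in (x - h)..(x + h), f t := hsplit.symm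

theorem StrictConvexOn.integral_lt_trapezoid_rule {f : ℝ → ℝ} {a b : ℝ} (hab : a < b)
    (hf : StrictConvexOn ℝ (Icc a b) f) (hfc : ContinuousOn f (Icc a b)) :
    ∫ t in a..b, f t < (b - a) * ((f a + f b) / 2) := by
  have hba : b - a ≠ 0 := sub_ne_zero.2 hab.ne'
  set chord : ℝ → ℝ := fun t ↦ f a + (t - a) * ((f b - f a) / (b - a))
  have hchord : ∫ t in a..b, chord t = (b - a) * ((f a + f b) / 2) := by
    simp only [chord]
    rw [integral_add, integral_mul_const, integral_comp_sub_right (fun t ↦ t)]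
    · rw [integral_const, integral_id, smul_eq_mul]; field_simp; ring
    all_goals exact Continuous.intervalIntegrable (by fun_prop) _ _
  have hbelow : ∀ t ∈ Ioo a b, f t < chord t := by
    intro t ht
    have key : f (((b - t) / (b - a)) • a + ((t - a) / (b - a)) • b)
        < ((b - t) / (b - a)) • f a + ((t - a) / (b - a)) • f b :=
      hf.2 (left_mem_Icc.2 hab.le) (right_mem_Icc.2 hab.le) hab.ne
        (div_pos (sub_pos.2 ht.2) (sub_pos.2 hab)) (div_pos (sub_pos.2 ht.1) (sub_pos.2 hab))
        (by field_simp; ring)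
    simp only [smul_eq_mul] at key
    rw [show (b - t) / (b - a) * a + (t - a) / (b - a) * b = t by field_simp; ring] at key
    calc f t < (b - t) / (b - a) * f a + (t - a) / (b - a) * f b := key
      _ = chord t := by simp only [chord]; field_simp; ring
  have hchord_right : chord b = f b := by simp only [chord]; field_simp; ring
  calc ∫ t in a..b, f t < ∫ t in a..b, chord t :=
        integral_lt_integral_of_continuousOn_of_le_of_exists_lt hab hfc
          (Continuous.continuousOn (by fun_prop))
          (fun t ht ↦ ht.2.eq_or_lt.elim (fun htb ↦ by rw [htb, hchord_right])
            fun htb ↦ (hbelow t ⟨ht.1, htb⟩).le)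
          ⟨(a + b) / 2, ⟨by linarith, by linarith⟩, hbelow _ ⟨by linarith, by linarith⟩⟩
    _ = (b - a) * ((f a + f b) / 2) := hchord

theorem strictConvexOn_rpow_of_neg {r : ℝ} (hr : r < 0) :
    StrictConvexOn ℝ (Ioi 0) fun x : ℝ ↦ x ^ r := by
  refine StrictMonoOn.strictConvexOn_of_deriv (convex_Ioi 0)
    (continuousOn_id.rpow_const fun x hx ↦ Or.inl (ne_of_gt hx)) ?_
  rw [interior_Ioi]
  intro x hx y _ hxy
  simp only [Real.deriv_rpow_const]
  exact mul_lt_mul_of_neg_left (rpow_lt_rpow_of_neg hx hxy (by linarith)) hr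

theorem continuousOn_rpow_const_Icc {a b r : ℝ} (ha : 0 < a) :
    ContinuousOn (fun x : ℝ ↦ x ^ r) (Icc a b) :=
  continuousOn_id.rpow_const fun _ hx ↦ Or.inl (ha.trans_le hx.1).ne'

theorem integral_rpow_neg_succ {μ a b : ℝ} (hμ : μ ≠ 0) (ha : 0 < a) (hb : 0 < b) :
    ∫ x in a..b, x ^ (-(μ + 1)) = (a ^ (-μ) - b ^ (-μ)) / μ := by
  rw [integral_rpow (Or.inr ⟨by contrapose! hμ; linarith, notMem_uIcc_of_lt ha hb⟩)]
  rw [show -(μ + 1) + 1 = -μ by ring, div_neg, ← neg_div, neg_sub]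

theorem two_mul_mul_rpow_neg_succ_lt {μ x h : ℝ} (hμ : 0 < μ) (hh : 0 < h) (hhx : h < x) :
    2 * h * x ^ (-(μ + 1)) < ((x - h) ^ (-μ) - (x + h) ^ (-μ)) / μ := by
  have hpos : 0 < x - h := by linarith
  rw [← integral_rpow_neg_succ hμ.ne' hpos (by linarith)]
  exact ((strictConvexOn_rpow_of_neg (by linarith)).subset
    ((Icc_subset_Ioi_iff (by linarith)).2 hpos) (convex_Icc _ _)).midpoint_rule_lt_integral hh
    (continuousOn_rpow_const_Icc hpos)

theorem rpow_neg_sub_rpow_neg_div_lt {μ a b : ℝ} (hμ : 0 < μ) (ha : 0 < a) (hab : a < b) :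
    (a ^ (-μ) - b ^ (-μ)) / μ < (b - a) * ((a ^ (-(μ + 1)) + b ^ (-(μ + 1))) / 2) := by
  rw [← integral_rpow_neg_succ hμ.ne' ha (ha.trans hab)]
  exact ((strictConvexOn_rpow_of_neg (by linarith)).subset
    ((Icc_subset_Ioi_iff hab.le).2 ha) (convex_Icc _ _)).integral_lt_trapezoid_rule hab
    (continuousOn_rpow_const_Icc ha)

theorem Antitone.hasSum_sub_succ {f : ℕ → ℝ} {l : ℝ} (hf : Antitone f)
    (hl : Tendsto f atTop (𝓝 l)) : HasSum (fun n ↦ f n - f (n + 1)) (f 0 - l) := by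
  rw [hasSum_iff_tendsto_nat_of_nonneg fun n ↦ sub_nonneg.2 (hf n.le_succ)]
  simp_rw [Finset.sum_range_sub']
  exact tendsto_const_nhds.sub hl

theorem hasSum_rpow_neg_sub_succ {q : ℕ → ℝ} {s : ℝ} (hs : 0 < s) (hq0 : 0 < q 0)
    (hq : Monotone q) (hqt : Tendsto q atTop atTop) :
    HasSum (fun n ↦ q n ^ (-s) - q (n + 1) ^ (-s)) (q 0 ^ (-s)) := by
  have hanti : Antitone fun n ↦ q n ^ (-s) := fun m n hmn ↦
    rpow_le_rpow_of_nonpos (hq0.trans_le (hq m.zero_le)) (hq hmn) (by linarith)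
  simpa using hanti.hasSum_sub_succ ((tendsto_rpow_neg_atTop hs).comp hqt)

theorem rpow_neg_div_eq_one_div {μ x : ℝ} (hx : 0 ≤ x) :
    x ^ (-μ) / μ = 1 / (μ * x ^ μ) := by
  rw [rpow_neg hx, one_div, mul_inv, div_eq_mul_inv, mul_comm]

noncomputable def mathieuSummand (μ u y : ℝ) (k : ℕ) : ℝ :=
  2 * ((k : ℝ) + 1 + u) / (((k : ℝ) + 1 + u) ^ 2 + y) ^ (μ + 1)

section MathieuSeries

variable {μ u y : ℝ}

theorem summable_mathieuSummand_and_tsum_lt (hμ : 0 < μ) (hu : -1 ≤ u)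
    (hy : 0 < u ^ 2 + u + y) :
    Summable (mathieuSummand μ u y) ∧
      ∑' k, mathieuSummand μ u y k < 1 / (μ * (u ^ 2 + u + y) ^ μ) := by
  set t : ℕ → ℝ := fun k ↦ (k : ℝ) + 1 + u
  set q : ℕ → ℝ := fun k ↦ t k * (t k - 1) + y
  have ht : ∀ k : ℕ, (k : ℝ) ≤ t k := fun k ↦ by simp only [t]; linarith
  have ht_succ : ∀ k, t (k + 1) = t k + 1 := fun k ↦ by simp only [t]; push_cast; ring
  have hq_succ : ∀ k, q (k + 1) = t k * (t k + 1) + y := fun k ↦ by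
    simp only [q]; rw [ht_succ]; ring
  have hq0 : q 0 = u ^ 2 + u + y := by simp only [q, t]; push_cast; ring
  have hq_mono : Monotone q := monotone_nat_of_le_succ fun k ↦ by
    rw [hq_succ]; nlinarith [ht k, k.cast_nonneg (α := ℝ)]
  have hq_pos : ∀ k, 0 < q k := fun k ↦ (hq0 ▸ hy).trans_le (hq_mono k.zero_le)
  have hq_top : Tendsto q atTop atTop := by
    refine tendsto_atTop_mono (fun k ↦ ?_)
      (tendsto_atTop_add_const_right _ (y - 1) tendsto_natCast_atTop_atTop)
    nlinarith [sq_nonneg (t k - 1), ht k, k.cast_nonneg (α := ℝ)]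
  have hT := (hasSum_rpow_neg_sub_succ hμ (hq_pos 0) hq_mono hq_top).div_const μ
  have hm_pos : ∀ k, 0 < t k ^ 2 + y := fun k ↦ by
    nlinarith [hq_pos k, ht k, k.cast_nonneg (α := ℝ)]
  -- `q k` and `q (k + 1)` lie at distance `t k` on either side of `t k ^ 2 + y`.
  have hlt : ∀ k, 0 < t k →
      mathieuSummand μ u y k < (q k ^ (-μ) - q (k + 1) ^ (-μ)) / μ := by
    intro k hk
    have := two_mul_mul_rpow_neg_succ_lt hμ hk (by nlinarith [hq_pos k] : t k < t k ^ 2 + y)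
    rw [rpow_neg (hm_pos k).le, ← div_eq_mul_inv] at this
    rw [hq_succ, mathieuSummand]
    convert this using 4 <;> ring
  have hle : ∀ k, mathieuSummand μ u y k ≤ (q k ^ (-μ) - q (k + 1) ^ (-μ)) / μ := by
    intro k
    rcases ((k.cast_nonneg (α := ℝ)).trans (ht k)).eq_or_lt with h0 | hpos
    · rw [hq_succ, show q k = t k * (t k - 1) + y from rfl, mathieuSummand,
        show (k : ℝ) + 1 + u = t k from rfl, ← h0]
      simp
    · exact (hlt k hpos).le
  have hS : Summable (mathieuSummand μ u y) :=
    .of_nonneg_of_le (fun k ↦ div_nonneg (by linarith [ht k]) (rpow_pos_of_pos (hm_pos k) _).le)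
      hle hT.summable
  refine ⟨hS, ?_⟩
  rw [← hq0, ← rpow_neg_div_eq_one_div (hq_pos 0).le]
  exact hasSum_lt hle (hlt 1 (by simp only [t]; push_cast; linarith)) hS.hasSum hT

theorem lt_tsum_mathieuSummand (hμ : 0 < μ) (hu : -1 ≤ u) (hy : 0 < u ^ 2 + u + y)
    (hS : Summable (mathieuSummand μ u y)) :
    1 / (μ * ((1 + u) ^ 2 + y) ^ μ) + (1 / 2 + u) / ((1 + u) ^ 2 + y) ^ (μ + 1)
      < ∑' k, mathieuSummand μ u y k := by
  set t : ℕ → ℝ := fun k ↦ (k : ℝ) + 1 + u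
  set m : ℕ → ℝ := fun k ↦ t k ^ 2 + y
  set g : ℕ → ℝ := fun k ↦ m k ^ (-(μ + 1))
  have ht : ∀ k : ℕ, (k : ℝ) ≤ t k := fun k ↦ by simp only [t]; linarith
  have ht_succ : ∀ k, t (k + 1) = t k + 1 := fun k ↦ by simp only [t]; push_cast; ring
  have hm_succ : ∀ k, m (k + 1) = m k + (2 * t k + 1) := fun k ↦ by
    simp only [m]; rw [ht_succ]; ring
  have hm_mono : StrictMono m := strictMono_nat_of_lt_succ fun k ↦ by
    rw [hm_succ]; linarith [ht k, k.cast_nonneg (α := ℝ)]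
  have hm0 : m 0 = (1 + u) ^ 2 + y := by simp [m, t]
  have hm_pos : ∀ k, 0 < m k := fun k ↦
    (show 0 < m 0 by rw [hm0]; linarith).trans_le (hm_mono.monotone k.zero_le)
  have hm_top : Tendsto m atTop atTop := by
    refine tendsto_atTop_mono (fun k ↦ ?_)
      (tendsto_atTop_add_const_right _ (y - 1) tendsto_natCast_atTop_atTop)
    nlinarith [sq_nonneg (t k - 1), ht k, k.cast_nonneg (α := ℝ)]
  have hf : ∀ k, mathieuSummand μ u y k = 2 * t k * g k := fun k ↦ by
    rw [mathieuSummand, div_eq_mul_inv, ← rpow_neg (hm_pos k).le]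
  have hL := (hasSum_rpow_neg_sub_succ hμ (hm_pos 0) hm_mono.monotone hm_top).div_const μ
  have hg := hasSum_rpow_neg_sub_succ (by linarith : 0 < μ + 1) (hm_pos 0) hm_mono.monotone hm_top
  have hR := ((hS.hasSum.add ((hasSum_nat_add_iff' 1).2 hS.hasSum)).div_const 2).add
    (hg.div_const 2)
  -- the trapezoid value `(t k + 1 / 2) * (g k + g (k + 1))`, regrouped so that its sum over `k`
  -- can be read off from the sums of the series and of the telescoping `g k - g (k + 1)`
  have htrapezoid : ∀ k, (m k ^ (-μ) - m (k + 1) ^ (-μ)) / μ <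
      (mathieuSummand μ u y k + mathieuSummand μ u y (k + 1)) / 2 +
        (g k - g (k + 1)) / 2 := fun k ↦ by
    rw [hf, hf, ht_succ]
    calc _ < (m (k + 1) - m k) * ((g k + g (k + 1)) / 2) :=
          rpow_neg_sub_rpow_neg_div_lt hμ (hm_pos k) (hm_mono k.lt_add_one)
      _ = _ := by rw [hm_succ]; ring
  have := hasSum_lt (fun k ↦ (htrapezoid k).le) (htrapezoid 0) hL hR
  rw [← hm0, ← rpow_neg_div_eq_one_div (hm_pos 0).le, div_eq_mul_inv (1 / 2 + u),
    ← rpow_neg (hm_pos 0).le]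
  rw [Finset.sum_range_one, hf 0, show t 0 = 1 + u by simp [t]] at this
  linarith

end MathieuSeries

theorem generalized_mathieu_double_inequality (μ u y : ℝ) (hμ : 0 < μ)
    (hu : -1 ≤ u) (hy : 0 < u ^ 2 + u + y) :
    1 / (μ * ((1 + u) ^ 2 + y) ^ μ) + (1 / 2 + u) / (((1 + u) ^ 2 + y) ^ (μ + 1))
      < (∑' k : ℕ, 2 * ((k : ℝ) + 1 + u) / ((((k : ℝ) + 1 + u) ^ 2 + y) ^ (μ + 1))) ∧
    (∑' k : ℕ, 2 * ((k : ℝ) + 1 + u) / ((((k : ℝ) + 1 + u) ^ 2 + y) ^ (μ + 1)))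
      < 1 / (μ * (u ^ 2 + u + y) ^ μ) := by
  obtain ⟨hS, hupper⟩ := summable_mathieuSummand_and_tsum_lt hμ hu hy
  exact ⟨lt_tsum_mathieuSummand hμ hu hy hS, hupper⟩
end
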